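/- arXiv:2103.07367 — 6 statements merged into one kernel-verified Lean document; each statement's English description precedes it below -/
import Mathlib

section
/- Let k be a positive integer and δ ≤ 1. Suppose A_{n−1} ≥ δ·B_{n−1}, and define U_n = A_{n−1} + k + Gℓ_n and V_n = B_{n−1} + k + Oℓ_n where Gℓ_n ≥ ⌊k/2⌋, Oℓ_n ≤ k, and δ ≤ (k + ⌊k/2⌋)/(2k). Then U_n ≥ δ·V_n. -/
theorem stmt_8 (k : ℕ) (hk : 2 ≤ k) (δ A' B' Gl Ol : ℝ)
    (hδ1 : δ ≤ 1)
    (hA : 0 ≤ A') (hB : 0 ≤ B') (hGl0 : 0 ≤ Gl) (hOl0 : 0 ≤ Ol)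
    (hInd : A' ≥ δ * B')
    (hGl : Gl ≥ ((k / 2 : ℕ) : ℝ))
    (hOl : Ol ≤ k)
    (hδ : δ ≤ ((k : ℝ) + ((k / 2 : ℕ) : ℝ)) / (2 * k)) :
    A' + k + Gl ≥ δ * (B' + k + Ol) := by
  have hkR : (2 : ℝ) ≤ (k : ℝ) := by exact_mod_cast hk
  have hk0 : (0 : ℝ) < 2 * k := by linarith
  have hδ' : δ * (2 * k) ≤ (k : ℝ) + ((k / 2 : ℕ) : ℝ) := by
    rw [div_eq_mul_inv] at hδ
    nlinarith [mul_le_mul_of_nonneg_right hδ hk0.le,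
      mul_inv_cancel₀ (ne_of_gt hk0)]
  rcases le_or_gt δ 0 with h | h
  · nlinarith
  · nlinarith
end

section
/- Let k ≥ 2 be an integer and δ = (k + ⌊k/3⌋)/(2k). Suppose A_{n−1} ≥ δ·B_{n−1}, Gℓ_n ≥ k/3 (as a real), and Oℓ_n ≤ k. Then A_{n−1} + k + Gℓ_n ≥ δ·(B_{n−1} + k + Oℓ_n). -/
theorem stmt_9 (k : ℕ) (hk : 2 ≤ k) (A' B' Gl Ol : ℝ)
    (hA : 0 ≤ A') (hB : 0 ≤ B') (hGl0 : 0 ≤ Gl) (hOl0 : 0 ≤ Ol)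
    (hInd : A' ≥ (((k : ℝ) + ((k / 3 : ℕ) : ℝ)) / (2 * k)) * B')
    (hGl : Gl ≥ (k : ℝ) / 3) (hOl : Ol ≤ k) :
    A' + k + Gl ≥ (((k : ℝ) + ((k / 3 : ℕ) : ℝ)) / (2 * k)) * (B' + k + Ol) := by
  have hk0 : (0:ℝ) < k := by positivity
  have hf : ((k / 3 : ℕ) : ℝ) ≤ (k : ℝ) / 3 := by
    have := Nat.cast_div_le (α := ℝ) (m := k) (n := 3)
    simpa using this
  have hf0 : (0:ℝ) ≤ ((k / 3 : ℕ) : ℝ) := Nat.cast_nonneg _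
  have hδ0 : (0:ℝ) ≤ ((k : ℝ) + ((k / 3 : ℕ) : ℝ)) / (2 * k) := by positivity
  have key : (((k : ℝ) + ((k / 3 : ℕ) : ℝ)) / (2 * k)) * ((k:ℝ) + Ol) ≤ (k:ℝ) + Gl := by
    have h1 : (((k : ℝ) + ((k / 3 : ℕ) : ℝ)) / (2 * k)) * ((k:ℝ) + Ol)
        ≤ (((k : ℝ) + ((k / 3 : ℕ) : ℝ)) / (2 * k)) * (2 * k) := by
      apply mul_le_mul_of_nonneg_left _ hδ0
      linarith
    have h2 : (((k : ℝ) + ((k / 3 : ℕ) : ℝ)) / (2 * k)) * (2 * k)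
        = (k : ℝ) + ((k / 3 : ℕ) : ℝ) := by
      field_simp
    linarith
  have h3 : (((k : ℝ) + ((k / 3 : ℕ) : ℝ)) / (2 * k)) * (B' + k + Ol)
      = (((k : ℝ) + ((k / 3 : ℕ) : ℝ)) / (2 * k)) * B'
        + (((k : ℝ) + ((k / 3 : ℕ) : ℝ)) / (2 * k)) * ((k:ℝ) + Ol) := by ring
  linarith
end

section
/- Let k ≥ 2 be an integer. If a deterministic online algorithm accepts a ≤ ⌊2k/3⌋ of k stage-1 (0,1) requests then its ratio on that instance is k/a ≥ k/⌊2k/3⌋ ≥ 2k/(k + ⌊k/3⌋); if it accepts a ≥ ⌈2k/3⌉ then its total over two stages is at most k + (k − a) ≤ k + ⌊k/3⌋ against an optimum of 2k. Hence for every a with 0 ≤ a ≤ k, max over the adversary's two strategies of (OPT profit)/(ALG profit) is at least 2k/(k + ⌊k/3⌋). -/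
theorem stmt_12 (k a : ℕ) (hk : 2 ≤ k) (ha : 0 < a) (hak : a ≤ k) :
    max ((k : ℚ) / a) ((2 * k : ℚ) / (2 * k - a)) ≥
      (2 * k : ℚ) / (k + ((k / 3 : ℕ) : ℚ)) := by
  set m := k / 3 with hm
  have h3 : 3 * m ≤ k := Nat.mul_div_le k 3 |>.trans_eq rfl |> (fun h => by omega)
  have h3' : k < 3 * (m + 1) := Nat.lt_mul_div_succ k (by norm_num)
  have haq : (0 : ℚ) < a := by exact_mod_cast ha
  have hkq : (0 : ℚ) ≤ k := by positivity
  have hkmq : (0 : ℚ) < k + m := by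
    have : (0:ℚ) < k := by exact_mod_cast (lt_of_lt_of_le (by norm_num) hk)
    positivity
  have hakq : (a : ℚ) ≤ k := by exact_mod_cast hak
  have hden : (0 : ℚ) < 2 * k - a := by
    have : (0:ℚ) < k := by exact_mod_cast (lt_of_lt_of_le (by norm_num) hk)
    linarith
  rcases le_or_gt (2 * a) (k + m) with h | h
  · apply le_max_of_le_left
    rw [div_le_div_iff₀ hkmq haq]
    have h' : (2 * a : ℚ) ≤ k + m := by exact_mod_cast h
    nlinarith
  · apply le_max_of_le_right
    have ham : k - m ≤ a := by omega
    have : (2 * k - a : ℚ) ≤ k + m := by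
      have : ((k : ℚ) - m) ≤ a := by
        have := ham
        have hmk : m ≤ k := by omega
        push_cast [Nat.cast_sub hmk] at *
        exact_mod_cast Nat.cast_le.mpr ham |>.trans_eq rfl
      linarith
    rw [div_le_div_iff₀ hkmq hden]
    nlinarith
end

section
/- For every real p with 0 ≤ p ≤ k (expected number of (0,1) requests accepted by a randomized algorithm in stage 1 out of k), max(k/p, 2k/(2k − p)) ≥ 3/2, with equality iff p = 2k/3. Hence no randomized algorithm for kS2L-F has competitive ratio below 3/2. -/
theorem stmt_13 (k p : ℝ) (hk : 0 < k) (hp : 0 < p) (hpk : p ≤ k) :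
    max (k / p) (2 * k / (2 * k - p)) ≥ 3 / 2 := by
  rcases le_or_gt p (2 * k / 3) with h | h
  · refine le_max_of_le_left ?_
    rw [le_div_iff₀ hp]; linarith
  · refine le_max_of_le_right ?_
    have hd : 0 < 2 * k - p := by linarith
    rw [le_div_iff₀ hd]; linarith
end

section
/- Let k > 0 and R ∈ [1,2] with Rk an integer, and let α = ((1−R)k + 3⌊Rk/2⌋)/(2+R), β = k − α. For every pair of reals eℓ, er ≥ 0 with eℓ + er ≤ k (expected acceptances), either eℓ ≤ α or er ≤ β. Consequently, min over the algorithm of the max over the adversary's two continuations of the ratio (k + OPT-side)/(k + ALG-side) is at least (2+R)/3. -/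
theorem stmt_15 (k : ℕ) (hk : 0 < k) (R : ℝ) (hR1 : 1 ≤ R) (hR2 : R ≤ 2)
    (hint : ∃ m : ℤ, R * k = m)
    (el er : ℝ) (hel : 0 ≤ el) (her : 0 ≤ er) (hsum : el + er ≤ k) :
    (el ≤ ((1 - R) * k + 3 * (⌊R * k / 2⌋ : ℝ)) / (2 + R) ∨
     er ≤ (k : ℝ) - ((1 - R) * k + 3 * (⌊R * k / 2⌋ : ℝ)) / (2 + R)) ∧
    (el ≤ ((1 - R) * k + 3 * (⌊R * k / 2⌋ : ℝ)) / (2 + R) →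
      ((k : ℝ) + (⌊R * k / 2⌋ : ℝ)) / (k + el) ≥ (2 + R) / 3) ∧
    (er ≤ (k : ℝ) - ((1 - R) * k + 3 * (⌊R * k / 2⌋ : ℝ)) / (2 + R) →
      ((k : ℝ) + (⌈R * k / 2⌉ : ℝ)) / (k + er) ≥ (2 + R) / 3) := by
  obtain ⟨m, hm⟩ := hint
  have h2R : (0:ℝ) < 2 + R := by linarith
  have hkpos : (0:ℝ) < k := by exact_mod_cast hk
  set a : ℤ := ⌊R * k / 2⌋ with ha
  set b : ℤ := ⌈R * k / 2⌉ with hb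
  have hfl : (a:ℝ) ≤ R * k / 2 := Int.floor_le _
  have hfl2 : R * k / 2 < a + 1 := Int.lt_floor_add_one _
  have hcl : R * k / 2 ≤ (b:ℝ) := Int.le_ceil _
  have hcl2 : (b:ℝ) - 1 < R * k / 2 := by
    have := Int.ceil_lt_add_one (R * k / 2)
    linarith
  have hab : a + b = m := by
    have h1 : 2 * (a:ℝ) ≤ m := by rw [← hm]; linarith
    have h2 : (m:ℝ) < 2 * a + 2 := by rw [← hm]; linarith
    have h3 : (m:ℝ) ≤ 2 * b := by rw [← hm]; linarith
    have h4 : 2 * (b:ℝ) - 2 < m := by rw [← hm]; linarith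
    have i1 : 2 * a ≤ m := by exact_mod_cast h1
    have i2 : m < 2 * a + 2 := by exact_mod_cast h2
    have i3 : m ≤ 2 * b := by exact_mod_cast h3
    have i4 : 2 * b - 2 < m := by exact_mod_cast h4
    omega
  have habR : (a:ℝ) + b = R * k := by
    rw [hm]; exact_mod_cast congrArg (Int.cast : ℤ → ℝ) hab
  refine ⟨?_, ?_, ?_⟩
  · by_cases h : el ≤ ((1 - R) * k + 3 * (a : ℝ)) / (2 + R)
    · exact Or.inl h
    · right; push_neg at h; linarith
  · intro h
    have h' : (2 + R) * el ≤ (1 - R) * k + 3 * a := by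
      rw [le_div_iff₀ h2R] at h; linarith
    rw [ge_iff_le, div_le_div_iff₀ (by norm_num) (by linarith)]
    nlinarith
  · intro h
    have hα : (2 + R) * (((1 - R) * k + 3 * (a:ℝ)) / (2 + R)) = (1 - R) * k + 3 * a :=
      mul_div_cancel₀ _ h2R.ne'
    have h' : (2 + R) * er ≤ (2 + R) * k - ((1 - R) * k + 3 * a) := by
      nlinarith [mul_le_mul_of_nonneg_left h h2R.le]
    rw [ge_iff_le, div_le_div_iff₀ (by norm_num) (by linarith)]
    nlinarith [habR]
end

section
/- Let k ≥ 2 and δ = (k + ⌊k/2⌋)/(2k). Suppose A_{n−1} ≥ δ·B_{n−1} and X_{n−1} := A_{n−2} + k + Gr_{n−1} ≥ δ·(B_{n−2} + k + Or_{n−1}) =: δ·Y_{n−1}, where A_{n−1} = A_{n−2} + Gℓ_{n−1} + Gr_{n−1}, B_{n−1} = B_{n−2} + Oℓ_{n−1} + Or_{n−1}, and all accepted counts are between 0 and k with Gℓ_{n−1} + Gr_{n−1} ≤ k and Oℓ_{n−1} + Or_{n−1} ≤ k. If Gℓ_n = Gr_{n−1} + (k − Gℓ_{n−1} − Gr_{n−1})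 and Oℓ_n ≤ Or_{n−1} + (k − Oℓ_{n−1} − Or_{n−1}), then U_n := A_{n−1} + k + Gℓ_n ≥ δ·(B_{n−1} + k + Oℓ_n) =: δ·V_n. -/
theorem stmt_19 (k : ℕ) (hk : 2 ≤ k)
    (A'' B'' Gl' Gr' Ol' Or' Gl Ol : ℝ)
    (hGl'0 : 0 ≤ Gl') (hGr'0 : 0 ≤ Gr') (hOl'0 : 0 ≤ Ol') (hOr'0 : 0 ≤ Or')
    (hGl'k : Gl' ≤ k) (hGr'k : Gr' ≤ k) (hOl'k : Ol' ≤ k) (hOr'k : Or' ≤ k)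
    (hA'' : 0 ≤ A'') (hB'' : 0 ≤ B'')
    (hGsum : Gl' + Gr' ≤ k) (hOsum : Ol' + Or' ≤ k)
    (hInd1 : A'' + Gl' + Gr' ≥ (((k : ℝ) + ((k / 2 : ℕ) : ℝ)) / (2 * k)) * (B'' + Ol' + Or'))
    (hIndX : A'' + k + Gr' ≥ (((k : ℝ) + ((k / 2 : ℕ) : ℝ)) / (2 * k)) * (B'' + k + Or'))
    (hGl : Gl = Gr' + (k - Gl' - Gr'))
    (hOl : Ol ≤ Or' + (k - Ol' - Or')) :
    (A'' + Gl' + Gr') + k + Gl ≥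
      (((k : ℝ) + ((k / 2 : ℕ) : ℝ)) / (2 * k)) * ((B'' + Ol' + Or') + k + Ol) := by
  have hk0 : (0:ℝ) < k := by positivity
  have hfl : ((k / 2 : ℕ) : ℝ) ≤ (k:ℝ) := by exact_mod_cast Nat.div_le_self k 2
  have hfl0 : (0:ℝ) ≤ ((k / 2 : ℕ) : ℝ) := by positivity
  set d : ℝ := (((k : ℝ) + ((k / 2 : ℕ) : ℝ)) / (2 * k)) with hd
  have hd1 : d ≤ 1 := by
    rw [hd, div_le_one (by positivity)]; linarith
  have hd0 : 0 ≤ d := by positivity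
  nlinarith [mul_le_mul_of_nonneg_left hOl hd0]
end
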